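/- arXiv:math/0506203 — 2 statements merged into one kernel-verified Lean document; each statement's English description precedes it below -/
import Mathlib

section
/- The semigroup F generated by s and f is contracting: if g ∈ F has decomposition φ(g) = ⟨g₀,g₁⟩π_g, then ‖g₀‖ ≤ (2/3)(‖g‖ + 2) and ‖g₁‖ ≤ (2/3)(‖g‖ + 2), where ‖·‖ is word length in the generators {s,f}. -/
/-- The transformation of `{0,1}*` given by the state `s` of the automaton `I`:
it flips the first letter (`φ(s) = ⟨e,e⟩σ`).  Letters: `false = 0`, `true = 1`. -/
def sAct : List Bool → List Bool
  | [] => []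
  | a :: w => (!a) :: w

/-- The transformation of `{0,1}*` given by the state `f` of the automaton `I`
(`φ(f) = ⟨s,f⟩ζ`): `0w ↦ 0·w^s` and `1w ↦ 0·w^f`. -/
def fAct : List Bool → List Bool
  | [] => []
  | false :: w => false :: sAct w
  | true :: w => false :: fAct w

/-- The elements `f_n` of the semigroup: `f₁ = s`, `f₂ = f`,
`f_n = f_{n-2} f_{n-1}` (products written left-to-right). -/
def fA : ℕ → List Bool → List Bool
  | 0 => id
  | 1 => sAct
  | 2 => fAct
  | (n + 3) => fun w => fA (n + 2) (fA (n + 1) w)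

/-- The left-to-right product `f_{i₁} f_{i₂} ⋯ f_{i_k}` of the elements `f_i`
along a list of indices. -/
def prodL (l : List ℕ) (w : List Bool) : List Bool :=
  l.foldl (fun v i => fA i v) w

/-- Membership in the semigroup `F` generated by `s` and `f`: `g` is a nonempty
product of the generators (`false` stands for the generator `s`, `true` for `f`;
products are written left-to-right). -/
def inF (g : List Bool → List Bool) : Prop :=
  ∃ u : List Bool, u ≠ [] ∧
    (fun w => u.foldl (fun v a => if a then fAct v else sAct v) w) = g

/-- The norm `‖g‖` of an element of `F`: the minimal length of a word in the
generators `{s, f}` representing `g`. -/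
noncomputable def normF (g : List Bool → List Bool) : ℕ :=
  sInf {n : ℕ | ∃ u : List Bool, u.length = n ∧ u ≠ [] ∧
    (fun w => u.foldl (fun v a => if a then fAct v else sAct v) w) = g}

/-- The sections `g₀, g₁` of `g` in its decomposition `φ(g) = ⟨g₀,g₁⟩π_g`,
where `g(i·w) = π_g(i)·w^{g_i}`. -/
def section0 (g : List Bool → List Bool) : List Bool → List Bool :=
  fun w => (g (false :: w)).tail

def section1 (g : List Bool → List Bool) : List Bool → List Bool :=
  fun w => (g (true :: w)).tail

/-- The word action. -/
def W (u w : List Bool) : List Bool :=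
  u.foldl (fun v a => if a then fAct v else sAct v) w

lemma W_nil (w : List Bool) : W [] w = w := rfl

lemma W_cons (a : Bool) (u w : List Bool) :
    W (a :: u) w = W u (if a then fAct w else sAct w) := rfl

lemma W_append (u v w : List Bool) : W (u ++ v) w = W v (W u w) := by
  simp [W, List.foldl_append]

lemma sAct_sAct (w : List Bool) : sAct (sAct w) = w := by
  cases w <;> simp [sAct]

lemma fAct_cube (w : List Bool) : fAct (fAct (fAct w)) = fAct w := by
  match w with
  | [] => rfl
  | false :: v => simp [fAct, sAct_sAct]
  | true :: v => simp [fAct, sAct_sAct]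

/-- Section computation: `sec i u = (output letter, section word)`. -/
def sec : Bool → List Bool → Bool × List Bool
  | i, [] => (i, [])
  | i, false :: u => sec (!i) u
  | i, true :: u => ((sec false u).1, i :: (sec false u).2)

lemma fAct_cons (i : Bool) (w : List Bool) :
    fAct (i :: w) = false :: (if i then fAct w else sAct w) := by
  cases i <;> rfl

lemma W_section : ∀ (u : List Bool) (i : Bool) (w : List Bool),
    W u (i :: w) = (sec i u).1 :: W (sec i u).2 w := by
  intro u
  induction u with
  | nil => intro i w; rfl
  | cons a u ih =>
    intro i w
    cases a with
    | false =>
        rw [show W (false :: u) (i :: w) = W u ((!i) :: w) from rfl, ih, sec]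
    | true =>
        cases i with
        | false =>
            rw [show W (true :: u) (false :: w) = W u (false :: sAct w) from rfl,
              ih false, sec]
            rfl
        | true =>
            rw [show W (true :: u) (true :: w) = W u (false :: fAct w) from rfl,
              ih false, sec]
            rfl

lemma sec_len : ∀ (u : List Bool) (i : Bool),
    (sec i u).2.length ≤ u.count true := by
  intro u
  induction u with
  | nil => intro i; simp [sec]
  | cons a u ih =>
    intro i
    cases a with
    | false => simpa [sec, List.count_cons] using ih (!i)
    | true => simp [sec, List.count_cons]; exact ih false

/-- Count bound for words with no `fff` factor. -/
lemma cnt : ∀ (n : ℕ) (u : List Bool), u.length ≤ n →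
    (∀ x y : List Bool, u ≠ x ++ true :: true :: true :: y) →
    3 * u.count true ≤ 2 * u.length + 2 := by
  intro n
  induction n with
  | zero =>
    intro u hu _
    have : u = [] := List.length_eq_zero_iff.mp (Nat.le_zero.mp hu)
    simp [this]
  | succ n ih =>
    intro u hu hF
    match u with
    | [] => simp
    | false :: u' =>
        have hl : u'.length ≤ n := by simp at hu; omega
        have h' := ih u' hl (fun x y h => hF (false :: x) y (by simp [h]))
        simp [List.count_cons]; omega
    | [true] => simp
    | true :: false :: u' =>
        have hl : u'.length ≤ n := by simp at hu; omega
        have h' := ih u' hl (fun x y h => hF (true :: false :: x) y (by simp [h]))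
        simp [List.count_cons]; omega
    | [true, true] => simp
    | true :: true :: false :: u' =>
        have hl : u'.length ≤ n := by simp at hu; omega
        have h' := ih u' hl (fun x y h => hF (true :: true :: false :: x) y (by simp [h]))
        simp [List.count_cons]; omega
    | true :: true :: true :: u' =>
        exact absurd rfl (hF [] u')

lemma key (g : List Bool → List Bool) (hg : inF g) (i : Bool) :
    inF (fun w => (g (i :: w)).tail) ∧
    3 * normF (fun w => (g (i :: w)).tail) ≤ 2 * (normF g + 2) := by
  obtain ⟨u₀, hu₀, hW₀⟩ := hg
  have hne : Set.Nonempty {n : ℕ | ∃ u : List Bool, u.length = n ∧ u ≠ [] ∧ W u = g} :=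
    ⟨u₀.length, u₀, rfl, hu₀, hW₀⟩
  have hnorm : normF g = sInf {n : ℕ | ∃ u : List Bool, u.length = n ∧ u ≠ [] ∧ W u = g} := rfl
  obtain ⟨u, hulen, hune, hWu⟩ := Nat.sInf_mem hne
  -- the minimal word has no `fff` factor
  have hnof : ∀ x y : List Bool, u ≠ x ++ true :: true :: true :: y := by
    intro x y hxy
    have hg' : W (x ++ true :: y) = g := by
      funext w
      rw [← hWu, hxy, W_append, W_append]
      show W (true :: y) (W x w) = W (true :: true :: true :: y) (W x w)
      rw [W_cons, W_cons, W_cons, W_cons]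
      simp [fAct_cube]
    have hle := Nat.sInf_le (show (x ++ true :: y).length ∈
      {n : ℕ | ∃ u : List Bool, u.length = n ∧ u ≠ [] ∧ W u = g} from
      ⟨x ++ true :: y, rfl, by simp, hg'⟩)
    rw [← hulen] at hle
    have h1 : (x ++ true :: y).length = x.length + 1 + y.length := by simp; omega
    have h2 : u.length = x.length + 3 + y.length := by simp [hxy]; omega
    omega
  have hcnt := cnt u.length u le_rfl hnof
  have hvc := sec_len u i
  have hsec : (fun w => (g (i :: w)).tail) = W (sec i u).2 := by
    funext w
    rw [← hWu, W_section]
    rfl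
  have hn1 : 1 ≤ normF g := by
    rw [hnorm, ← hulen]
    have := List.length_pos_iff.mpr hune
    omega
  by_cases hvnil : (sec i u).2 = []
  · have hid : (fun w => [false, false].foldl (fun v a => if a then fAct v else sAct v) w)
        = (fun w => (g (i :: w)).tail) := by
      rw [hsec, hvnil]
      funext w
      show sAct (sAct w) = w
      exact sAct_sAct w
    refine ⟨⟨[false, false], by simp, hid⟩, ?_⟩
    have h2 : normF (fun w => (g (i :: w)).tail) ≤ 2 :=
      Nat.sInf_le ⟨[false, false], rfl, by simp, hid⟩
    omega
  · refine ⟨⟨(sec i u).2, hvnil, hsec.symm⟩, ?_⟩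
    have h1 : normF (fun w => (g (i :: w)).tail) ≤ (sec i u).2.length :=
      Nat.sInf_le ⟨(sec i u).2, rfl, hvnil, hsec.symm⟩
    rw [hnorm, ← hulen]
    omega

/-- The semigroup `F` is contracting: if `φ(g) = ⟨g₀,g₁⟩π_g` then
`‖g₀‖ ≤ (2/3)(‖g‖+2)` and `‖g₁‖ ≤ (2/3)(‖g‖+2)`. -/
theorem F_contracting (g : List Bool → List Bool) (hg : inF g) :
    inF (section0 g) ∧ inF (section1 g) ∧
    3 * normF (section0 g) ≤ 2 * (normF g + 2) ∧
    3 * normF (section1 g) ≤ 2 * (normF g + 2) := by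
  obtain ⟨a0, b0⟩ := key g hg false
  obtain ⟨a1, b1⟩ := key g hg true
  exact ⟨a0, a1, b0, b1⟩
end

section
/- In the semigroup F generated by the automaton I, for all n ≥ 1 the relation f_{n+1} f_n² f_{n+2} = f_{n+3} holds. -/
lemma fA_step (n : ℕ) (w : List Bool) : fA (n + 3) w = fA (n + 2) (fA (n + 1) w) := rfl

lemma fA_nil : ∀ n, fA n [] = [] := by
  intro n
  induction n using Nat.strong_induction_on with
  | _ n ih =>
    match n with
    | 0 => rfl
    | 1 => rfl
    | 2 => rfl
    | (m + 3) =>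
      rw [fA_step, ih (m + 1) (by omega), ih (m + 2) (by omega)]

/-- chain `f_a f_{a+2} ⋯ f_{a+2k-2}` applied left-to-right -/
def DA : ℕ → ℕ → List Bool → List Bool
  | _, 0, w => w
  | a, (k+1), w => DA (a+2) k (fA a w)

lemma DA_nil : ∀ k a, DA a k [] = [] := by
  intro k
  induction k with
  | zero => intro a; rfl
  | succ k ih => intro a; show DA (a+2) k (fA a []) = []; rw [fA_nil]; exact ih (a+2)

lemma sec0 : ∀ n, ∀ w, fA (n+2) (false :: w) = false :: fA (n+1) w := by
  intro n
  induction n using Nat.strong_induction_on with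
  | _ n ih =>
    match n with
    | 0 => intro w; rfl
    | 1 => intro w; rfl
    | (m + 2) =>
      intro w
      show fA (m + 3) (fA (m + 2) (false :: w)) = false :: fA (m + 3) w
      rw [ih m (by omega), ih (m+1) (by omega), fA_step]

lemma Dapp : ∀ k a w, DA a (k+1) w = fA (a + 2*k) (DA a k w) := by
  intro k
  induction k with
  | zero => intro a w; rfl
  | succ k ih =>
    intro a w
    show DA (a+2) (k+1) (fA a w) = fA (a + 2*(k+1)) (DA (a+2) k (fA a w))
    rw [ih (a+2), show a+2+2*k = a+2*(k+1) by ring]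

lemma DA0 : ∀ k a w, DA (a+2) k (false :: w) = false :: DA (a+1) k w := by
  intro k
  induction k with
  | zero => intro a w; rfl
  | succ k ih =>
    intro a w
    show DA (a+4) k (fA (a+2) (false :: w)) = false :: DA (a+3) k (fA (a+1) w)
    rw [sec0 a w]
    exact ih (a+2) (fA (a+1) w)

lemma S1e : ∀ k w, fA (2*k+2) (true :: w) = false :: DA 2 k (fAct w) := by
  intro k
  induction k with
  | zero => intro w; rfl
  | succ k ih =>
    intro w
    show fA (2*k+3) (fA (2*k+2) (true :: w)) = _
    rw [ih w, sec0 (2*k+1), show 2*k+1+1 = 2+2*k by ring, ← Dapp k 2]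

lemma S1o : ∀ k w, fA (2*k+3) (true :: w) = false :: DA 3 k (sAct w) := by
  intro k
  induction k with
  | zero => intro w; rfl
  | succ k ih =>
    intro w
    show fA (2*k+4) (fA (2*k+3) (true :: w)) = _
    rw [ih w, sec0 (2*k+2), show 2*k+2+1 = 3+2*k by ring, ← Dapp k 3]

lemma phi34 : ∀ j,
    (∀ v, fA (2*j+3) (fA (2*j+1) (fA (2*j+1) (DA 3 j v))) = fA (2*j+3) (DA 3 j v)) ∧
    (∀ v, fA (2*j+4) (fA (2*j+2) (fA (2*j+2) (DA 4 j v))) = fA (2*j+4) (DA 4 j v)) := by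
  intro j
  induction j with
  | zero =>
    constructor
    · intro v
      show fA 3 (sAct (sAct v)) = fA 3 v
      rw [sAct_sAct]
    · intro v
      match v with
      | [] => rfl
      | false :: u =>
        show fA 4 (fAct (fAct (false :: u))) = fA 4 (false :: u)
        show fA 4 (fAct (false :: sAct u)) = _
        show fA 4 (false :: sAct (sAct u)) = _
        rw [sAct_sAct]
      | true :: u =>
        have l : fA 4 (fA 2 (fA 2 (DA 4 0 (true :: u)))) = false :: fAct (fAct u) := by
          show fA 4 (false :: sAct (fAct u)) = _
          rw [sec0 2]
          show false :: fAct (sAct (sAct (fAct u))) = _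
          rw [sAct_sAct]
        have r : fA 4 (true :: u) = false :: fAct (fAct u) := by
          show fA 3 (fA 2 (true :: u)) = _
          show fA 3 (false :: fAct u) = _
          rw [sec0 1]
          rfl
        rw [show (2*0+4) = 4 by ring, show (2*0+2) = 2 by ring, l]
        exact r.symm
  | succ j ih =>
    have h3 : ∀ v, fA (2*(j+1)+3) (fA (2*(j+1)+1) (fA (2*(j+1)+1) (DA 3 (j+1) v))) =
        fA (2*(j+1)+3) (DA 3 (j+1) v) := by
      intro v
      match v with
      | [] => rw [DA_nil, fA_nil, fA_nil, fA_nil]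
      | c :: u =>
        have key : ∀ x, fA (2*(j+1)+3) (fA (2*(j+1)+1) (fA (2*(j+1)+1) (false :: DA 4 j x))) =
            fA (2*(j+1)+3) (false :: DA 4 j x) := by
          intro x
          rw [show 2*(j+1)+1 = (2*j+1)+2 by ring, show 2*(j+1)+3 = (2*j+3)+2 by ring,
            sec0 (2*j+1), sec0 (2*j+1), sec0 (2*j+3), sec0 (2*j+3)]
          rw [show 2*j+1+1 = 2*j+2 by ring, show 2*j+3+1 = 2*j+4 by ring]
          rw [ih.2 x]
        cases c with
        | false =>
          have e1 : DA 3 (j+1) (false :: u) = false :: DA 4 j (fA 2 u) := by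
            show DA 5 j (fA 3 (false :: u)) = _
            rw [sec0 1 u]
            exact DA0 j 3 (fA 2 u)
          rw [e1]; exact key (fA 2 u)
        | true =>
          have e1 : DA 3 (j+1) (true :: u) = false :: DA 4 j (sAct u) := by
            show DA 5 j (fA 3 (true :: u)) = _
            show DA 5 j (fA 2 (fA 1 (true :: u))) = _
            show DA 5 j (false :: sAct u) = _
            exact DA0 j 3 (sAct u)
          rw [e1]; exact key (sAct u)
    refine ⟨h3, ?_⟩
    intro v
    match v with
    | [] => rw [DA_nil, fA_nil, fA_nil, fA_nil]
    | c :: u =>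
      have key : ∀ y, fA (2*(j+1)+4) (fA (2*(j+1)+2) (fA (2*(j+1)+2) (false :: DA 3 (j+1) y))) =
          fA (2*(j+1)+4) (false :: DA 3 (j+1) y) := by
        intro y
        rw [show 2*(j+1)+2 = (2*j+2)+2 by ring, show 2*(j+1)+4 = (2*j+4)+2 by ring,
          sec0 (2*j+2), sec0 (2*j+2), sec0 (2*j+4), sec0 (2*j+4)]
        rw [show 2*j+2+1 = 2*(j+1)+1 by ring, show 2*j+4+1 = 2*(j+1)+3 by ring]
        rw [h3 y]
      cases c with
      | false =>
        have e1 : DA 4 (j+1) (false :: u) = false :: DA 3 (j+1) u := by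
          show DA 6 j (fA 4 (false :: u)) = _
          rw [sec0 2 u]
          show DA 6 j (false :: fA 3 u) = _
          rw [DA0 j 4 (fA 3 u)]
          rfl
        rw [e1]; exact key u
      | true =>
        have e1 : DA 4 (j+1) (true :: u) = false :: DA 3 (j+1) (sAct (fAct u)) := by
          show DA 6 j (fA 4 (true :: u)) = _
          have : fA 4 (true :: u) = false :: fAct (fAct u) := by
            show fA 3 (fA 2 (true :: u)) = _
            show fA 3 (false :: fAct u) = _
            rw [sec0 1]
            rfl
          rw [this, DA0 j 4]
          show false :: DA 5 j (fAct (fAct u)) = false :: DA 5 j (fA 3 (sAct (fAct u)))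
          show _ = false :: DA 5 j (fA 2 (fA 1 (sAct (fAct u))))
          show _ = false :: DA 5 j (fA 2 (sAct (sAct (fAct u))))
          rw [sAct_sAct]
          rfl
        rw [e1]; exact key (sAct (fAct u))

lemma phi2 : ∀ j v, fA (2*j+2) (fA (2*j) (fA (2*j) (DA 2 j v))) = fA (2*j+2) (DA 2 j v) := by
  intro j
  induction j with
  | zero => intro v; rfl
  | succ j ih =>
    intro v
    match v with
    | [] => rw [DA_nil, fA_nil, fA_nil, fA_nil]
    | c :: u =>
      have key : ∀ x, fA (2*(j+1)+2) (fA (2*(j+1)) (fA (2*(j+1)) (false :: DA 3 j x))) =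
          fA (2*(j+1)+2) (false :: DA 3 j x) := by
        intro x
        rw [show 2*(j+1)+2 = (2*j+2)+2 by ring, show 2*(j+1) = (2*j)+2 by ring,
          sec0 (2*j), sec0 (2*j), sec0 (2*j+2), sec0 (2*j+2)]
        rw [show 2*j+2+1 = 2*j+3 by ring]
        rw [(phi34 j).1 x]
      cases c with
      | false =>
        have e1 : DA 2 (j+1) (false :: u) = false :: DA 3 j (sAct u) := by
          show DA 4 j (fA 2 (false :: u)) = _
          show DA 4 j (false :: sAct u) = _
          exact DA0 j 2 (sAct u)
        rw [e1]; exact key (sAct u)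
      | true =>
        have e1 : DA 2 (j+1) (true :: u) = false :: DA 3 j (fAct u) := by
          show DA 4 j (fA 2 (true :: u)) = _
          show DA 4 j (false :: fAct u) = _
          exact DA0 j 2 (fAct u)
        rw [e1]; exact key (fAct u)

lemma mainG : ∀ m w, fA (m+3) (fA (m+1) (fA (m+1) (fA (m+2) w))) = fA (m+3) (fA (m+2) w) := by
  intro m
  induction m with
  | zero =>
    intro w
    show fA 3 (sAct (sAct (fA 2 w))) = _
    rw [sAct_sAct]
  | succ m ih =>
    intro w
    match w with
    | [] => rw [fA_nil, fA_nil, fA_nil, fA_nil]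
    | false :: u =>
      rw [show m+1+2 = (m+1)+2 by ring, sec0 (m+1) u,
        show m+1+1 = m+2 by ring, sec0 m, sec0 m,
        show m+1+3 = (m+2)+2 by ring, sec0 (m+2), sec0 (m+2)]
      rw [show m+1 = m+1 by ring, show m+2+1 = m+3 by ring]
      exact congrArg (false :: ·) (ih u)
    | true :: u =>
      rcases Nat.even_or_odd m with ⟨a, ha⟩ | ⟨a, ha⟩
      · -- m = 2a, f_{m+3} = f_{2a+3}: odd section
        subst ha
        have ha2 : a + a = 2*a := by ring
        rw [ha2]
        have e1 : fA (2*a+1+2) (true :: u) = false :: DA 3 a (sAct u) := by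
          rw [show 2*a+1+2 = 2*a+3 by ring]; exact S1o a u
        rw [e1, show 2*a+1+1 = (2*a)+2 by ring, sec0 (2*a), sec0 (2*a),
          show 2*a+1+3 = (2*a+2)+2 by ring, sec0 (2*a+2), sec0 (2*a+2)]
        rw [show 2*a+1 = 2*a+1 by ring, show 2*a+2+1 = 2*a+3 by ring]
        exact congrArg (false :: ·) ((phi34 a).1 (sAct u))
      · -- m = 2a+1: f_{m+3} = f_{2a+4}: even section
        subst ha
        have e1 : fA (2*a+1+1+2) (true :: u) = false :: DA 2 (a+1) (fAct u) := by
          rw [show 2*a+1+1+2 = 2*(a+1)+2 by ring]; exact S1e (a+1) u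
        rw [e1, show 2*a+1+1+1 = (2*a+1)+2 by ring, sec0 (2*a+1), sec0 (2*a+1),
          show 2*a+1+1+3 = (2*a+3)+2 by ring, sec0 (2*a+3), sec0 (2*a+3)]
        rw [show 2*a+1+1 = 2*(a+1) by ring, show 2*a+3+1 = 2*(a+1)+2 by ring]
        exact congrArg (false :: ·) (phi2 (a+1) (fAct u))

/-- In `F`, for all `n ≥ 1` the relation `f_{n+1} f_n² f_{n+2} = f_{n+3}`
holds (products written left-to-right). -/
theorem fn_fusion (n : ℕ) (hn : 1 ≤ n) :
    ∀ w : List Bool, fA (n + 2) (fA n (fA n (fA (n + 1) w))) = fA (n + 3) w := by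
  obtain ⟨m, rfl⟩ : ∃ m, n = m + 1 := ⟨n - 1, by omega⟩
  intro w
  have h := mainG m w
  show fA (m+3) (fA (m+1) (fA (m+1) (fA (m+2) w))) = fA ((m+1)+3) w
  rw [h]
  rfl
end
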